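/- Let γ ≥ 14 and 1 ≤ k ≤ n as fixed, and let H'_{n,k} denote the set of (3γk, (γ+1)k)-pseudo-periodic strings in Σ^n. Let S1, S2 ∈ H'_{n,k} with (3γk, (γ+1)k)-bases S'_1 and S'_2, respectively. If for some integer m one has Ham(S1, cyc^m(S2)) ≤ k, then S'_1 = cyc^m(S'_2). -/

import Mathlib

/-! The bases `S'₁` and `cyc^m(S'₂)` have periods `p, q ≤ ℓ` dividing `n`, and by the triangle
inequality they differ in `K ≤ (2γ+3)k` positions, so `K·p < n` and `K·q < n` because `γ > 3`.
Such strings coincide. Within a class mod `gcd(p,q)`, the positions `x` are indexed by the pairs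
`(x mod p, x mod q)`, a grid with `p / gcd(p,q)` rows and `q / gcd(p,q)` columns, and each cell
stands for `n / lcm(p,q)` positions. So fewer cells than rows and than columns are mismatched;
some row and some column are then mismatch-free, and chaining through them forces agreement in
every cell. -/

open Finset
open scoped Classical

noncomputable section

variable {α : Type*}

/-- `i ↻ n`: 1-indexed wrap-around of an (integer) position. -/
def zwrap (n : ℕ) (i : ℤ) : ℕ := ((i - 1) % (n : ℤ)).toNat + 1

/-- `S*[i]`: the infinite cyclic extension of the length-`n` string `S` (1-indexed). -/
def cext (n : ℕ) (S : ℕ → α) (i : ℕ) : α := S ((i - 1) % n + 1)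

/-- The fragment `S*[a..]`, i.e. the string `w` with `w[j] = S*[a+j-1]`. -/
def frag (n : ℕ) (S : ℕ → α) (a : ℕ) : ℕ → α := fun j => cext n S (a + j - 1)

/-- Hamming distance restricted to positions `[a..b]` (1-indexed strings). -/
def hamIcc (a b : ℕ) (S T : ℕ → α) : ℕ := ((Finset.Icc a b).filter fun j => S j ≠ T j).card

/-- Hamming distance between two length-`n` strings. -/
def ham (n : ℕ) (S T : ℕ → α) : ℕ := hamIcc 1 n S T

/-- `p` is a period of the length-`L` string `w` (1-indexed). -/
def IsPeriod (L : ℕ) (w : ℕ → α) (p : ℕ) : Prop :=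
  1 ≤ p ∧ ∀ j, 1 ≤ j → j + p ≤ L → w j = w (j + p)

/-- `per(w)`: the shortest period of the length-`L` string `w`. -/
def per (L : ℕ) (w : ℕ → α) : ℕ := sInf {p | IsPeriod L w p}

/-- `root(S)`: the length of the primitive root of the length-`n` string `S`,
i.e. the least length of a string `Q` with `S = Q^α`. -/
def root (n : ℕ) (S : ℕ → α) : ℕ := sInf {r | r ∣ n ∧ IsPeriod n S r}

/-- `S` is `(a,b)`-pseudo-periodic: it has an `(a,b)`-base. -/
def PseudoPeriodic (n : ℕ) (a b : ℝ) (S : ℕ → α) : Prop :=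
  ∃ S' : ℕ → α, (root n S' : ℝ) ≤ (n : ℝ) / a ∧ (ham n S S' : ℝ) ≤ b

/-- `cyc(S)`: left cyclic rotation, `cyc(S)[i] = S*[i+1]`. -/
def cyc (n : ℕ) (S : ℕ → α) : ℕ → α := fun i => cext n S (i + 1)

/-- `cyc^m(S)` for an integer `m`: `cyc^m(S)[i] = S*[i+m]` (cyclically). -/
def cycZ (n : ℕ) (m : ℤ) (S : ℕ → α) : ℕ → α := fun i => S (zwrap n ((i : ℤ) + m))

/-- `rot_n(P) = {(i-1) ↻ n : i ∈ P}`. -/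
def rotSet (n : ℕ) (P : Finset ℕ) : Finset ℕ := P.image fun i => zwrap n ((i : ℤ) - 1)

/-- `ρ_{S,i} = per(S*[i..i+3ℓ-1])`. -/
def rho (n ℓ : ℕ) (S : ℕ → α) (i : ℕ) : ℕ := per (3 * ℓ) (frag n S i)

/-- `μ_{S,i}*`: the infinite periodic extension of `μ_{S,i} = S*[i..i+ρ_{S,i}-1]` (1-indexed). -/
def muExt (n ℓ : ℕ) (S : ℕ → α) (i : ℕ) : ℕ → α :=
  fun j => cext n S (i + (j - 1) % rho n ℓ S i)

/-- `P(S)`: the set of cubic positions of `S`. -/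
def cubicSet (n ℓ : ℕ) (S : ℕ → α) : Finset ℕ :=
  (Finset.Icc 1 n).filter fun i => rho n ℓ S i ≤ ℓ

/-- The defining set of `τ_{S,i}`:
`{τ ≥ 1 : τ < (n/(γk))·Ham(S*[i..i+τ-1], μ_{S,i}*[1..τ])}`. -/
def tauSet (n ℓ k : ℕ) (γ : ℝ) (S : ℕ → α) (i : ℕ) : Set ℕ :=
  {τ | 1 ≤ τ ∧ (τ : ℝ) < (n : ℝ) / (γ * k) * (hamIcc 1 τ (frag n S i) (muExt n ℓ S i) : ℝ)}

/-- `τ_{S,i}`. -/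
def tau (n ℓ k : ℕ) (γ : ℝ) (S : ℕ → α) (i : ℕ) : ℕ := sInf (tauSet n ℓ k γ S i)

/-- `R_{S,i} = [i..i+τ_{S,i}-1]`. -/
def Rset (n ℓ k : ℕ) (γ : ℝ) (S : ℕ → α) (i : ℕ) : Finset ℕ :=
  Finset.Icc i (i + tau n ℓ k γ S i - 1)

/-- `M_{S,i} = {j ∈ R_{S,i} : S*[j] ≠ μ_{S,i}*[j-i+1]}`. -/
def Mset (n ℓ k : ℕ) (γ : ℝ) (S : ℕ → α) (i : ℕ) : Finset ℕ :=
  (Rset n ℓ k γ S i).filter fun j => cext n S j ≠ muExt n ℓ S i (j - i + 1)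

/-- `A_{S,i} = {j ∈ R_{S,i} : [j..j+2ℓ-1] ⊆ R_{S,i} \ M_{S,i}}`. -/
def Aset (n ℓ k : ℕ) (γ : ℝ) (S : ℕ → α) (i : ℕ) : Finset ℕ :=
  (Rset n ℓ k γ S i).filter fun j =>
    Finset.Icc j (j + 2 * ℓ - 1) ⊆ Rset n ℓ k γ S i \ Mset n ℓ k γ S i

/-- `f_c(S) = ∪_{i ∈ P(S)} {j ↻ n : j ∈ M_{S,i}}`. -/
def fc (n ℓ k : ℕ) (γ : ℝ) (S : ℕ → α) : Finset ℕ :=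
  (cubicSet n ℓ S).biUnion fun i => (Mset n ℓ k γ S i).image fun j => zwrap n (j : ℤ)


theorem eq_of_card_filter_ne_lt {ι κ : Type*} {A : Finset ι} {B : Finset κ} {u : ι → α}
    {v : κ → α} (hA : #{e ∈ A ×ˢ B | u e.1 ≠ v e.2} < #A)
    (hB : #{e ∈ A ×ˢ B | u e.1 ≠ v e.2} < #B) {a : ι} (ha : a ∈ A) {b : κ} (hb : b ∈ B) :
    u a = v b := by
  set E := {e ∈ A ×ˢ B | u e.1 ≠ v e.2}
  have agree : ∀ a ∈ A, ∀ b ∈ B, (a, b) ∉ E → u a = v b := by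
    intro a ha b hb hab
    by_contra h
    exact hab (mem_filter.2 ⟨mem_product.2 ⟨ha, hb⟩, h⟩)
  obtain ⟨a₀, ha₀, ha₀E⟩ := exists_mem_notMem_of_card_lt_card (hA.trans_le' card_image_le :
    #(E.image Prod.fst) < #A)
  obtain ⟨b₀, hb₀, hb₀E⟩ := exists_mem_notMem_of_card_lt_card (hB.trans_le' card_image_le :
    #(E.image Prod.snd) < #B)
  calc u a = v b₀ := agree a ha b₀ hb₀ fun h => hb₀E (mem_image_of_mem Prod.snd h)
    _ = u a₀ := (agree a₀ ha₀ b₀ hb₀ fun h => ha₀E (mem_image_of_mem Prod.fst h)).symm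
    _ = v b := agree a₀ ha₀ b hb fun h => ha₀E (mem_image_of_mem Prod.fst h)

theorem card_mul_div_lcm_le_count_ne {f g : ℕ → α} {p q n : ℕ}
    (hf : Function.Periodic f p) (hg : Function.Periodic g q) (hp : p ≠ 0) (hq : q ≠ 0)
    (A B : Finset ℕ) (hA : ∀ a ∈ A, a < p) (hB : ∀ b ∈ B, b < q)
    (hAB : ∀ a ∈ A, ∀ b ∈ B, a ≡ b [MOD p.gcd q]) :
    #{e ∈ A ×ˢ B | f e.1 ≠ g e.2} * (n / p.lcm q) ≤ Nat.count (fun x => f x ≠ g x) n := by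
  set E := {e ∈ A ×ˢ B | f e.1 ≠ g e.2}
  set s := {x ∈ range n | (x % p, x % q) ∈ E}
  have hs : #s ≤ Nat.count (fun x => f x ≠ g x) n := by
    rw [Nat.count_eq_card_filter_range]
    refine card_le_card fun x hx => ?_
    obtain ⟨hxn, hxE⟩ := mem_filter.1 hx
    refine mem_filter.2 ⟨hxn, ?_⟩
    rw [← hf.map_mod_nat, ← hg.map_mod_nat]
    exact (mem_filter.1 hxE).2
  refine le_trans ?_ hs
  rw [mul_comm]
  refine mul_card_image_le_card_of_maps_to (fun x hx => (mem_filter.1 hx).2) _ ?_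
  rintro ⟨a, b⟩ hab
  obtain ⟨ha, hb⟩ := mem_product.1 (mem_filter.1 hab).1
  -- By the Chinese remainder theorem, the fibre over `(a, b)` contains a residue class mod `lcm p q`.
  obtain ⟨c, hca, hcb⟩ := Nat.chineseRemainder' (hAB a ha b hb)
  calc n / p.lcm q ≤ Nat.count (· ≡ c [MOD p.lcm q]) n := by
        rw [Nat.count_modEq_card _ (Nat.lcm_pos hp.bot_lt hq.bot_lt)]
        exact Nat.le_add_right _ _
    _ ≤ _ := by
      rw [Nat.count_eq_card_filter_range]
      refine card_le_card fun x hx => ?_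
      obtain ⟨hxn, hxc⟩ := mem_filter.1 hx
      have hxa : x % p = a :=
        Eq.trans ((hxc.of_dvd (Nat.dvd_lcm_left p q)).trans hca) (Nat.mod_eq_of_lt (hA a ha))
      have hxb : x % q = b :=
        Eq.trans ((hxc.of_dvd (Nat.dvd_lcm_right p q)).trans hcb) (Nat.mod_eq_of_lt (hB b hb))
      simp only [mem_filter, hxa, hxb, and_true]
      exact ⟨hxn, hab⟩

theorem card_filter_modEq_range_of_dvd {d p : ℕ} (hd : 0 < d) (hdp : d ∣ p) (x : ℕ) :
    #{a ∈ range p | a ≡ x [MOD d]} = p / d := by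
  rw [← Nat.count_eq_card_filter_range, Nat.count_modEq_card _ hd, Nat.mod_eq_zero_of_dvd hdp]
  simp

theorem eq_of_periodic_of_count_ne_mul_lt {f g : ℕ → α} {p q n : ℕ}
    (hf : Function.Periodic f p) (hg : Function.Periodic g q) (hpn : p ∣ n) (hqn : q ∣ n)
    (hp : Nat.count (fun x => f x ≠ g x) n * p < n)
    (hq : Nat.count (fun x => f x ≠ g x) n * q < n) : f = g := by
  have hp0 : p ≠ 0 := by rintro rfl; rw [zero_dvd_iff] at hpn; omega
  have hq0 : q ≠ 0 := by rintro rfl; rw [zero_dvd_iff] at hqn; omega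
  set K := Nat.count (fun x => f x ≠ g x) n
  set d := p.gcd q
  have hd : 0 < d := Nat.gcd_pos_of_pos_left q hp0.bot_lt
  set L := p.lcm q
  set N := n / L
  have hn : N * L = n := Nat.div_mul_cancel (Nat.lcm_dvd hpn hqn)
  have hLp : p / d * q = L := Nat.div_mul_right_comm (Nat.gcd_dvd_left p q) q
  have hLq : q / d * p = L := by
    rw [Nat.div_mul_right_comm (Nat.gcd_dvd_right p q), mul_comm]; rfl
  funext x
  set A := {a ∈ range p | a ≡ x [MOD d]}
  set B := {b ∈ range q | b ≡ x [MOD d]}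
  set E := {e ∈ A ×ˢ B | f e.1 ≠ g e.2}
  have hE : #E * N ≤ K := card_mul_div_lcm_le_count_ne hf hg hp0 hq0 A B
    (fun a ha => mem_range.1 (mem_filter.1 ha).1) (fun b hb => mem_range.1 (mem_filter.1 hb).1)
    (fun a ha b hb => (mem_filter.1 ha).2.trans (mem_filter.1 hb).2.symm)
  have hEA : #E < #A := by
    rw [card_filter_modEq_range_of_dvd hd (Nat.gcd_dvd_left p q)]
    by_contra! h
    have : n ≤ K * q := calc
      n = p / d * N * q := by rw [← hn, ← hLp]; ring
      _ ≤ #E * N * q := by gcongr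
      _ ≤ K * q := by gcongr
    omega
  have hEB : #E < #B := by
    rw [card_filter_modEq_range_of_dvd hd (Nat.gcd_dvd_right p q)]
    by_contra! h
    have : n ≤ K * p := calc
      n = q / d * N * p := by rw [← hn, ← hLq]; ring
      _ ≤ #E * N * p := by gcongr
      _ ≤ K * p := by gcongr
    omega
  rw [← hf.map_mod_nat x, ← hg.map_mod_nat x]
  exact eq_of_card_filter_ne_lt hEA hEB
    (mem_filter.2 ⟨mem_range.2 (Nat.mod_lt x hp0.bot_lt),
      (Nat.mod_modEq x p).of_dvd (Nat.gcd_dvd_left p q)⟩)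
    (mem_filter.2 ⟨mem_range.2 (Nat.mod_lt x hq0.bot_lt),
      (Nat.mod_modEq x q).of_dvd (Nat.gcd_dvd_right p q)⟩)

theorem zwrap_mem_Icc {n : ℕ} (hn : 0 < n) (z : ℤ) : zwrap n z ∈ Icc 1 n := by
  have h₀ := Int.emod_nonneg (z - 1) (Int.natCast_ne_zero.2 hn.ne')
  have h₁ := Int.emod_lt_of_pos (z - 1) (Int.natCast_pos.2 hn)
  rw [mem_Icc, zwrap]
  omega

theorem natCast_zwrap {n : ℕ} (hn : 0 < n) (z : ℤ) : (zwrap n z : ℤ) = (z - 1) % n + 1 := by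
  have h₀ := Int.emod_nonneg (z - 1) (Int.natCast_ne_zero.2 hn.ne')
  rw [zwrap]
  omega

theorem zwrap_natCast_of_mem_Icc {n i : ℕ} (hi : i ∈ Icc 1 n) : zwrap n i = i := by
  obtain ⟨h₁, h₂⟩ := mem_Icc.1 hi
  rw [zwrap, Int.emod_eq_of_lt (by omega) (by omega)]
  omega

theorem zwrap_add_self (n : ℕ) (z : ℤ) : zwrap n (z + n) = zwrap n z := by
  rw [zwrap, zwrap, add_sub_right_comm, Int.add_emod_right]

theorem zwrap_add_injOn {n : ℕ} (hn : 0 < n) (m : ℤ) :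
    Set.InjOn (fun i : ℕ => zwrap n (i + m)) (Icc 1 n : Finset ℕ) := by
  intro i hi j hj hij
  simp only [coe_Icc, Set.mem_Icc] at hi hj
  have h := congrArg (fun x : ℕ => (x : ℤ)) hij
  simp only [natCast_zwrap hn] at h
  have hmod : ((i : ℤ) - 1) % n = ((j : ℤ) - 1) % n := by
    refine Int.ModEq.add_right_cancel' m ?_
    unfold Int.ModEq
    rw [sub_add_eq_add_sub, sub_add_eq_add_sub]
    omega
  rw [Int.emod_eq_of_lt (by omega) (by omega), Int.emod_eq_of_lt (by omega) (by omega)] at hmod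
  omega

theorem IsPeriod.apply_add_mul {L p : ℕ} {w : ℕ → α} (hw : IsPeriod L w p) {j : ℕ} (hj : 1 ≤ j)
    (t : ℕ) (ht : j + t * p ≤ L) : w (j + t * p) = w j := by
  induction t with
  | zero => simp
  | succ t ih =>
    rw [add_mul, one_mul, ← add_assoc, ← hw.2 _ (by omega) (by linarith)]
    exact ih (by linarith)

theorem IsPeriod.apply_zwrap {L p : ℕ} {w : ℕ → α} (hw : IsPeriod L w p) (hL : 0 < L)
    (hpL : p ∣ L) (z : ℤ) : w (zwrap L z) = w (zwrap p z) := by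
  have hp : 0 < p := hw.1
  obtain ⟨h₁, h₂⟩ := mem_Icc.1 (zwrap_mem_Icc hL z)
  set i := zwrap L z - 1
  have hi : zwrap L z = i % p + 1 + i / p * p := by
    have := Nat.mod_add_div' i p
    omega
  have hmod : zwrap p z = i % p + 1 := by
    have hcast : ((i % p : ℕ) : ℤ) + 1 = (z - 1) % p + 1 := by
      rw [Int.natCast_mod, Nat.cast_sub h₁, natCast_zwrap hL, Nat.cast_one, add_sub_cancel_right,
        Int.emod_emod_of_dvd _ (Int.natCast_dvd_natCast.2 hpL)]
    rw [← Nat.cast_inj (R := ℤ), natCast_zwrap hp, ← hcast, Nat.cast_add, Nat.cast_one]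
  rw [hi, hmod, hw.apply_add_mul (by omega) _ (by omega)]

theorem root_dvd_and_isPeriod {n : ℕ} (hn : 0 < n) (S : ℕ → α) :
    root n S ∣ n ∧ IsPeriod n S (root n S) :=
  Nat.sInf_mem (s := {r | r ∣ n ∧ IsPeriod n S r}) ⟨n, dvd_rfl, hn, fun _ _ h => by omega⟩

theorem ham_comm (n : ℕ) (S T : ℕ → α) : ham n S T = ham n T S := by
  simp only [ham, hamIcc, ne_comm]

theorem ham_triangle (n : ℕ) (S T U : ℕ → α) : ham n S U ≤ ham n S T + ham n T U := by
  unfold ham hamIcc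
  refine (card_le_card ?_).trans (card_union_le _ _)
  intro j
  simp only [mem_union, mem_filter]
  grind

theorem ham_cycZ_le {n : ℕ} (hn : 0 < n) (m : ℤ) (S T : ℕ → α) :
    ham n (cycZ n m S) (cycZ n m T) ≤ ham n S T := by
  unfold ham hamIcc
  refine card_le_card_of_injOn (fun i : ℕ => zwrap n (i + m)) (fun i hi => ?_)
    ((zwrap_add_injOn hn m).mono fun i hi => (mem_filter.1 hi).1)
  obtain ⟨-, hST⟩ := mem_filter.1 hi
  exact mem_filter.2 ⟨zwrap_mem_Icc hn _, hST⟩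

theorem ham_cycZ_le_add {n : ℕ} (hn : 0 < n) (m : ℤ) (S T S' T' : ℕ → α) :
    ham n S' (cycZ n m T') ≤ ham n S S' + ham n S (cycZ n m T) + ham n T T' := by
  have h₁ := ham_triangle n S' S (cycZ n m T')
  have h₂ := ham_triangle n S (cycZ n m T) (cycZ n m T')
  have h₃ := ham_cycZ_le hn m T T'
  rw [ham_comm n S' S] at h₁
  omega

theorem eq_cycZ_of_ham_mul_root_lt {n : ℕ} {S T : ℕ → α} {m : ℤ}
    (hS : ham n S (cycZ n m T) * root n S < n) (hT : ham n S (cycZ n m T) * root n T < n) :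
    ∀ i ∈ Icc 1 n, S i = cycZ n m T i := by
  have hn : 0 < n := pos_of_gt hS
  obtain ⟨hpn, hp⟩ := root_dvd_and_isPeriod hn S
  obtain ⟨hqn, hq⟩ := root_dvd_and_isPeriod hn T
  set f : ℕ → α := fun x => S (zwrap (root n S) x)
  set g : ℕ → α := fun x => T (zwrap (root n T) (x + m))
  have hf : Function.Periodic f (root n S) := fun x => by
    simp only [f, Nat.cast_add, zwrap_add_self]
  have hg : Function.Periodic g (root n T) := fun x => by
    simp only [g, Nat.cast_add, add_right_comm _ _ m, zwrap_add_self]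
  have hSf : ∀ i ∈ Icc 1 n, S i = f i := fun i hi =>
    (congrArg S (zwrap_natCast_of_mem_Icc hi)).symm.trans (hp.apply_zwrap hn hpn i)
  have hTg : ∀ i ∈ Icc 1 n, cycZ n m T i = g i := fun i _ => hq.apply_zwrap hn hqn _
  have hfg : Function.Periodic (fun x => f x ≠ g x) n := by
    intro x
    simp only [Nat.div_mul_cancel hpn ▸ hf.nat_mul (n / root n S) x,
      Nat.div_mul_cancel hqn ▸ hg.nat_mul (n / root n T) x]
  have hcount : ham n S (cycZ n m T) = Nat.count (fun x => f x ≠ g x) n := by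
    rw [← Nat.filter_Ico_card_eq_of_periodic 1 n _ hfg, add_comm, Ico_add_one_right_eq_Icc]
    unfold ham hamIcc
    congr 1
    exact filter_congr fun i hi => by rw [hSf i hi, hTg i hi]
  rw [hcount] at hS hT
  have hfg_eq := eq_of_periodic_of_count_ne_mul_lt hf hg hpn hqn hS hT
  intro i hi
  rw [hSf i hi, hTg i hi, hfg_eq]

theorem stmt18_general {α : Type*} (n k ℓ : ℕ) (γ : ℝ)
    (hk1 : 1 ≤ k) (hγ : 14 ≤ γ) (hℓ1 : 1 ≤ ℓ)
    (hn : (n : ℝ) = 3 * γ * k * ℓ)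
    (S1 S2 S1' S2' : ℕ → α)
    (h1r : (root n S1' : ℝ) ≤ (n : ℝ) / (3 * γ * k))
    (h1h : (ham n S1 S1' : ℝ) ≤ (γ + 1) * k)
    (h2r : (root n S2' : ℝ) ≤ (n : ℝ) / (3 * γ * k))
    (h2h : (ham n S2 S2' : ℝ) ≤ (γ + 1) * k)
    (m : ℤ) (hham : ham n S1 (cycZ n m S2) ≤ k) :
    ∀ i ∈ Finset.Icc 1 n, S1' i = cycZ n m S2' i := by
  have hk : (0 : ℝ) < k := by exact_mod_cast hk1
  have hℓ : (0 : ℝ) < ℓ := by exact_mod_cast hℓ1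
  have hnpos : 0 < n := by exact_mod_cast (show (0 : ℝ) < n by rw [hn]; positivity)
  have hdist : (ham n S1' (cycZ n m S2') : ℝ) ≤ (2 * γ + 3) * k := by
    have h := (Nat.cast_le (α := ℝ)).2 (ham_cycZ_le_add hnpos m S1 S2 S1' S2')
    have hham' := (Nat.cast_le (α := ℝ)).2 hham
    push_cast at h
    linarith
  have hlt : ∀ r : ℕ, (r : ℝ) ≤ n / (3 * γ * k) → ham n S1' (cycZ n m S2') * r < n := by
    intro r hr
    rw [hn, mul_div_cancel_left₀ _ (by positivity)] at hr
    have : (ham n S1' (cycZ n m S2') : ℝ) * r < n := calc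
      _ ≤ (2 * γ + 3) * k * ℓ := mul_le_mul hdist hr (by positivity) (by positivity)
      _ < n := by rw [hn]; nlinarith
    exact_mod_cast this
  exact eq_cycZ_of_ham_mul_root_lt (hlt _ h1r) (hlt _ h2r)

/-- Let `S1, S2 ∈ H'_{n,k}` with `(3γk,(γ+1)k)`-bases `S'_1, S'_2`. If
`Ham(S1, cyc^m(S2)) ≤ k` for some integer `m`, then `S'_1 = cyc^m(S'_2)`. -/
theorem stmt18 {α : Type*} (n k ℓ : ℕ) (γ : ℝ)
    (hk1 : 1 ≤ k) (hkn : k ≤ n) (hγ : 14 ≤ γ) (hℓ1 : 1 ≤ ℓ)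
    (hn : (n : ℝ) = 3 * γ * k * ℓ)
    (S1 S2 S1' S2' : ℕ → α)
    (h1r : (root n S1' : ℝ) ≤ (n : ℝ) / (3 * γ * k))
    (h1h : (ham n S1 S1' : ℝ) ≤ (γ + 1) * k)
    (h2r : (root n S2' : ℝ) ≤ (n : ℝ) / (3 * γ * k))
    (h2h : (ham n S2 S2' : ℝ) ≤ (γ + 1) * k)
    (m : ℤ) (hham : ham n S1 (cycZ n m S2) ≤ k) :
    ∀ i ∈ Finset.Icc 1 n, S1' i = cycZ n m S2' i :=
  stmt18_general n k ℓ γ hk1 hγ hℓ1 hn S1 S2 S1' S2' h1r h1h h2r h2h m hham
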